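/- Let H = diag(1, -1) and B the 2×2 zero matrix. For every a ∈ (0, 1], the matrix B(a) = diag(a, -a) is H-nonnegative but has no H-nonnegative square root. Consequently, for any H-nonnegative square root A of B, there are H-nonnegative matrices arbitrarily close to B having no H-nonnegative square root. -/

import Mathlib

/-!
If `H` is Hermitian and invertible and `H * A` is positive semidefinite, every eigenvalue `μ`
of `A` is real: for an eigenvector `v`, `v⋆ (H A) v = μ · v⋆ H v` with both quadratic forms
real, and if `v⋆ H v = 0` then `(H A) v = 0`, so `μ • H v = 0` and `μ = 0`. By spectral
mapping the spectrum of `A ^ 2` then lies in `[0, ∞)`, whereas `diag(a, -a)` has the negative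
eigenvalue `-a`.
-/

open Matrix
open scoped ComplexOrder

attribute [local instance] Matrix.normedAddCommGroup

namespace Matrix

variable {n : Type*} [Fintype n] [DecidableEq n]

theorem exists_mulVec_eq_smul_of_mem_spectrum {K : Type*} [Field K] {A : Matrix n n K} {μ : K}
    (hμ : μ ∈ spectrum K A) : ∃ v, v ≠ 0 ∧ A *ᵥ v = μ • v := by
  rw [← spectrum_toLin', ← Module.End.hasEigenvalue_iff_mem_spectrum] at hμ
  obtain ⟨v, hv, hv0⟩ := hμ.exists_hasEigenvector
  exact ⟨v, hv0, by simpa using Module.End.mem_eigenspace_iff.mp hv⟩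

variable {H A : Matrix n n ℂ}

theorem im_eq_zero_of_mulVec_eq_smul_of_posSemidef_mul (hH : H.IsHermitian) (hHu : IsUnit H)
    (hHA : (H * A).PosSemidef) {μ : ℂ} {v : n → ℂ} (hv : v ≠ 0)
    (hAv : A *ᵥ v = μ • v) : μ.im = 0 := by
  have hHAv : (H * A) *ᵥ v = μ • H *ᵥ v := by rw [← mulVec_mulVec, hAv, mulVec_smul]
  have hquad : star v ⬝ᵥ (H * A) *ᵥ v = μ * (star v ⬝ᵥ H *ᵥ v) := by
    rw [hHAv, dotProduct_smul, smul_eq_mul]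
  by_cases hq : star v ⬝ᵥ H *ᵥ v = 0
  · have hzero : μ • H *ᵥ v = 0 := by
      rw [← hHAv, ← hHA.dotProduct_mulVec_zero_iff, hquad, hq, mul_zero]
    rcases smul_eq_zero.mp hzero with rfl | hHv
    · rfl
    · exact absurd
        ((mulVec_injective_iff_isUnit.mpr hHu) (hHv.trans (mulVec_zero H).symm)) hv
  · have hq_im : (star v ⬝ᵥ H *ᵥ v).im = 0 := hH.im_star_dotProduct_mulVec_self v
    have hq_re : (star v ⬝ᵥ H *ᵥ v).re ≠ 0 := fun h => hq (Complex.ext h hq_im)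
    have hr_im := hHA.isHermitian.im_star_dotProduct_mulVec_self v
    rw [RCLike.im_to_complex, hquad, Complex.mul_im, hq_im, mul_zero, zero_add] at hr_im
    exact (mul_eq_zero.mp hr_im).resolve_right hq_re

theorem im_eq_zero_of_mem_spectrum_of_posSemidef_mul (hH : H.IsHermitian) (hHu : IsUnit H)
    (hHA : (H * A).PosSemidef) {μ : ℂ} (hμ : μ ∈ spectrum ℂ A) : μ.im = 0 := by
  obtain ⟨v, hv, hAv⟩ := exists_mulVec_eq_smul_of_mem_spectrum hμ
  exact im_eq_zero_of_mulVec_eq_smul_of_posSemidef_mul hH hHu hHA hv hAv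

theorem nonneg_of_mem_spectrum_sq_of_posSemidef_mul (hH : H.IsHermitian) (hHu : IsUnit H)
    (hHA : (H * A).PosSemidef) {μ : ℂ} (hμ : μ ∈ spectrum ℂ (A ^ 2)) : 0 ≤ μ := by
  rw [spectrum.map_pow_of_pos A two_pos] at hμ
  obtain ⟨ν, hν, rfl⟩ := hμ
  obtain ⟨r, rfl⟩ : ∃ r : ℝ, (r : ℂ) = ν :=
    ⟨ν.re, Complex.ext rfl (im_eq_zero_of_mem_spectrum_of_posSemidef_mul hH hHu hHA hν).symm⟩
  beta_reduce
  rw [← Complex.ofReal_pow]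
  exact Complex.zero_le_real.mpr (sq_nonneg _)

end Matrix

lemma isHermitian_signMatrix : (!![(1 : ℂ), 0; 0, -1]).IsHermitian := by
  ext i j; fin_cases i <;> fin_cases j <;> simp

lemma isUnit_signMatrix : IsUnit !![(1 : ℂ), 0; 0, -1] :=
  IsUnit.of_mul_eq_one !![(1 : ℂ), 0; 0, -1] (by simp [one_fin_two])

lemma signMatrix_mul_diag (a : ℂ) : !![(1 : ℂ), 0; 0, -1] * !![a, 0; 0, -a] = a • 1 := by
  simp [one_fin_two]

lemma posSemidef_signMatrix_mul_diag {a : ℝ} (ha : 0 ≤ a) :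
    (!![(1 : ℂ), 0; 0, -1] * !![(a : ℂ), 0; 0, -(a : ℂ)]).PosSemidef := by
  rw [signMatrix_mul_diag]
  exact PosSemidef.one.smul (Complex.zero_le_real.mpr ha)

lemma not_exists_sq_eq_diag_of_posSemidef_signMatrix_mul {a : ℝ} (ha : 0 < a) :
    ¬ ∃ A : Matrix (Fin 2) (Fin 2) ℂ,
        A ^ 2 = !![(a : ℂ), 0; 0, -(a : ℂ)] ∧ (!![(1 : ℂ), 0; 0, -1] * A).PosSemidef := by
  rintro ⟨A, hA2, hHA⟩
  have hmem : -(a : ℂ) ∈ spectrum ℂ (A ^ 2) := by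
    rw [hA2, ← diagonal_vec2, spectrum_diagonal]
    exact ⟨1, rfl⟩
  have hnonneg := nonneg_of_mem_spectrum_sq_of_posSemidef_mul isHermitian_signMatrix
    isUnit_signMatrix hHA hmem
  rw [← Complex.ofReal_neg, Complex.zero_le_real] at hnonneg
  linarith

lemma norm_diag_le (a : ℝ) : ‖!![(a : ℂ), 0; 0, -(a : ℂ)]‖ ≤ |a| := by
  rw [norm_le_iff (abs_nonneg a)]
  intro i j; fin_cases i <;> fin_cases j <;> simp

theorem no_stable_H_nonnegative_sq_root_diag :
    (∀ a : ℝ, 0 < a → a ≤ 1 →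
      ((!![(1 : ℂ), 0; 0, -1] * !![(a : ℂ), 0; 0, -(a : ℂ)]).PosSemidef ∧
        ¬ ∃ A : Matrix (Fin 2) (Fin 2) ℂ,
            A ^ 2 = !![(a : ℂ), 0; 0, -(a : ℂ)] ∧
            (!![(1 : ℂ), 0; 0, -1] * A).PosSemidef)) ∧
    ∀ ε > (0 : ℝ), ∃ B' : Matrix (Fin 2) (Fin 2) ℂ,
      (!![(1 : ℂ), 0; 0, -1] * B').PosSemidef ∧ ‖B' - 0‖ < ε ∧
      ¬ ∃ A : Matrix (Fin 2) (Fin 2) ℂ,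
          A ^ 2 = B' ∧ (!![(1 : ℂ), 0; 0, -1] * A).PosSemidef := by
  refine ⟨fun a ha _ => ⟨posSemidef_signMatrix_mul_diag ha.le,
    not_exists_sq_eq_diag_of_posSemidef_signMatrix_mul ha⟩, fun ε hε => ?_⟩
  have hε2 : 0 < ε / 2 := half_pos hε
  refine ⟨_, posSemidef_signMatrix_mul_diag hε2.le, ?_,
    not_exists_sq_eq_diag_of_posSemidef_signMatrix_mul hε2⟩
  calc ‖!![((ε / 2 : ℝ) : ℂ), 0; 0, -((ε / 2 : ℝ) : ℂ)] - 0‖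
      ≤ |ε / 2| := by rw [sub_zero]; exact norm_diag_le _
    _ < ε := by rw [abs_of_pos hε2]; exact half_lt_self hε
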